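/- arXiv:2307.02271 — 2 statements merged into one kernel-verified Lean document; each statement's English description precedes it below -/
import Mathlib

section
/- Let λ ∈ ∂𝔻, let φ ∈ H^∞(𝔻), and let T = R_λ φ(B) be the corresponding extended λ-eigenoperator of B on H²(𝔻). Set Φ_n(z) = φ(z)·φ(λz)·⋯·φ(λ^{n−1}z). If there exist c > 0 and n₀ ∈ ℕ such that inf_{z∈𝔻} |Φ_n(z)| ≥ c for all n ≥ n₀, then Tⁿ is invertible with ‖T^{−n}‖ ≤ 1/c for all n ≥ n₀, and T is not hypercyclic. -/
open Complex Metric Filter Topology ComplexConjugate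

noncomputable section

/-- The Hardy space `H²(𝔻)`, modeled via Taylor coefficients as the sequence space `ℓ²`:
an analytic function `f(z) = Σ aₙ zⁿ` on the unit disk with `Σ |aₙ|² < ∞` is identified
with its coefficient sequence. -/
abbrev H2 := lp (fun _ : ℕ => ℂ) 2

/-- The analytic function on the unit disk represented by an element of `H²`. -/
def H2.toFun (f : H2) (z : ℂ) : ℂ := ∑' n : ℕ, f n * z ^ n

/-- `B` is the backward shift `(Bf)(z) = (f(z) - f(0))/z`, i.e. on Taylor coefficients
`(Bf)ₙ = f_{n+1}`. -/
def IsBackwardShift (B : H2 →L[ℂ] H2) : Prop :=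
  ∀ (f : H2) (n : ℕ), B f n = f (n + 1)

/-- `R` is the dilation operator `(R_λ f)(z) = f(λ z)`, i.e. on Taylor coefficients
`(R_λ f)ₙ = λⁿ fₙ`. -/
def IsDilation (lam : ℂ) (R : H2 →L[ℂ] H2) : Prop :=
  ∀ (f : H2) (n : ℕ), R f n = lam ^ n * f n

/-- `φ ∈ H^∞(𝔻)`: a bounded analytic function on the open unit disk. -/
def InHinf (φ : ℂ → ℂ) : Prop :=
  DifferentiableOn ℂ φ (ball (0:ℂ) 1) ∧ ∃ M : ℝ, ∀ z ∈ ball (0:ℂ) 1, ‖φ z‖ ≤ M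

/-- `Φ = φ(B)`, the coanalytic Toeplitz operator `M_{φ̄}⋆` with symbol `φ`: there is a
Taylor coefficient sequence `c` for `φ` on the disk such that
`(Φ f)ₙ = Σ_k c_k f_{n+k}` (equivalently `Φ = Σ_k c_k B^k`). -/
def IsCoToeplitz (φ : ℂ → ℂ) (Φ : H2 →L[ℂ] H2) : Prop :=
  ∃ c : ℕ → ℂ,
    (∀ z ∈ ball (0:ℂ) 1, HasSum (fun k => c k * z ^ k) (φ z)) ∧
    (∀ (f : H2) (n : ℕ), HasSum (fun k => c k * f (n + k)) (Φ f n))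

/-- An operator `T` is hypercyclic if some vector has dense orbit `{Tⁿ x : n ∈ ℕ}`. -/
def Hypercyclic (T : H2 →L[ℂ] H2) : Prop :=
  ∃ x : H2, Dense (Set.range fun n : ℕ => (T ^ n) x)

/-- An operator `T` is supercyclic if for some vector `x` the set of scalar multiples
`{μ Tⁿ x : μ ∈ ℂ, n ∈ ℕ}` is dense. -/
def Supercyclic (T : H2 →L[ℂ] H2) : Prop :=
  ∃ x : H2, Dense {y : H2 | ∃ (μ : ℂ) (n : ℕ), y = μ • (T ^ n) x}

/-- `φ̄(z) = conj (φ (conj z))`. -/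
def conjSymb (φ : ℂ → ℂ) (z : ℂ) : ℂ := conj (φ (conj z))

/-- `λ` is an irrational rotation: `|λ| = 1` and `λ` is not a root of unity. -/
def IsIrrationalRotation (lam : ℂ) : Prop :=
  ‖lam‖ = 1 ∧ ∀ n : ℕ, 0 < n → lam ^ n ≠ 1

/-- `Ψ_n(z) = φ̄(z)·φ̄(αz)⋯φ̄(α^{n-1}z)` where `α = conj λ`. -/
def psiProd (φ : ℂ → ℂ) (lam : ℂ) (n : ℕ) (z : ℂ) : ℂ :=
  ∏ j ∈ Finset.range n, conjSymb φ ((conj lam) ^ j * z)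

/-- `Ω_n(z) = φ̄(ωz)·φ̄(ω²z)⋯φ̄(ωⁿz)` where `ω = 1/conj λ`. -/
def omegaProd (φ : ℂ → ℂ) (lam : ℂ) (n : ℕ) (z : ℂ) : ℂ :=
  ∏ j ∈ Finset.range n, conjSymb φ (((conj lam)⁻¹) ^ (j + 1) * z)

lemma memℓp_geom {a : ℂ} (ha : ‖a‖ < 1) : Memℓp (fun n : ℕ => (conj a) ^ n) 2 := by
  apply memℓp_gen
  have hs : Summable fun n : ℕ => (‖a‖ ^ 2) ^ n :=
    summable_geometric_of_lt_one (by positivity) (by nlinarith [norm_nonneg a])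
  refine hs.congr fun n => ?_
  rw [norm_pow]
  simp only [RCLike.norm_conj]
  rw [ENNReal.toReal_ofNat, Real.rpow_two]
  ring

/-- The reproducing kernel `k_a(z) = 1/(1 - conj(a) z) = Σ (conj a)ⁿ zⁿ` of `H²(𝔻)`,
as an element of `H²` (junk value `0` if `a` is outside the unit disk). -/
def kernelVec (a : ℂ) : H2 :=
  if ha : ‖a‖ < 1 then ⟨fun n => (conj a) ^ n, memℓp_geom ha⟩ else 0

/-- `T` satisfies the Hypercyclicity Criterion for the sequence `(n_k)`. -/
def SatisfiesHCCriterion (T : H2 →L[ℂ] H2) (nk : ℕ → ℕ) : Prop :=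
  ∃ (X₀ Y₀ : Set H2) (S : ℕ → H2 → H2),
    Dense X₀ ∧ Dense Y₀ ∧
    (∀ x ∈ X₀, Tendsto (fun k => (T ^ nk k) x) atTop (𝓝 0)) ∧
    (∀ y ∈ Y₀, Tendsto (fun k => S k y) atTop (𝓝 0)) ∧
    (∀ y ∈ Y₀, Tendsto (fun k => (T ^ nk k) (S k y)) atTop (𝓝 y))

/-- A family `F` of functions is normal at `z₀`: on some open neighborhood of `z₀`,
every (sub)sequence of the family has a locally uniformly convergent subsequence. -/
def NormalAt (F : ℕ → ℂ → ℂ) (z₀ : ℂ) : Prop :=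
  ∃ U : Set ℂ, IsOpen U ∧ z₀ ∈ U ∧
    ∀ g : ℕ → ℕ, StrictMono g →
      ∃ (h : ℕ → ℕ) (f : ℂ → ℂ), StrictMono h ∧
        TendstoLocallyUniformlyOn (fun j => F (g (h j))) f atTop U

/-- The family `{F n : n ≥ 1}` is uniformly bounded on compact subsets of the unit disk. -/
def UnifBddOnCompacts (F : ℕ → ℂ → ℂ) : Prop :=
  ∀ K : Set ℂ, K ⊆ ball (0:ℂ) 1 → IsCompact K →
    ∃ M : ℝ, ∀ n : ℕ, 1 ≤ n → ∀ z ∈ K, ‖F n z‖ ≤ M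


/-
The reproducing kernels `k_a` (`‖a‖ < 1`) span a dense subspace of `H²` and diagonalise the
co-analytic Toeplitz operators: `ψ(B) k_a = ψ(ā) k_a` and `R_μ k_a = k_{μ̄ a}`. Hence
`Tⁿ k_a = Φₙ(ā) k_{λ̄ⁿ a}`, so `Tⁿ` is inverted by `(1/Φₙ)(B) R_{λ̄ⁿ}`, and it remains to see that
`‖ψ(B)‖ ≤ sup_𝔻 |ψ|`, here for `ψ = 1/Φₙ`, bounded by `1/c`.

For a polynomial symbol `P` and a vector `f` supported in `[0, N)`, the coefficients of
`P(B) f` form, up to the factor `m`, the inverse discrete Fourier transform (over the `m`-th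
roots of unity, `m ≥ N + deg P`) of the transform of `f` multiplied by the values of `P` on the
circle, so Parseval's identity bounds them by `sup_{|w| = 1} |P(w)|`. Applying this to the Taylor
polynomials of `ψ(r ·)` and letting first the degree tend to `∞`, then `r → 1`, gives the bound on
truncations, and then on all of `H²`.

Finally `‖Tⁿ x‖ ≥ c ‖x‖` for `n ≥ n₀` keeps all but finitely many points of an orbit of `x ≠ 0`
outside a ball around `0`, so no orbit is dense.
-/

open Finset FormalMultilinearSeries
open scoped ENNReal NNReal

section PowerSeries

variable {c : ℕ → ℂ} {ψ : ℂ → ℂ}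

lemma hasFPowerSeriesOnBall_ofScalars_of_hasSum
    (h : ∀ z ∈ ball (0:ℂ) 1, HasSum (fun k => c k * z ^ k) (ψ z)) :
    HasFPowerSeriesOnBall ψ (ofScalars ℂ c) 0 1 where
  r_le := by
    refine ENNReal.le_of_forall_nnreal_lt fun t ht => ?_
    have ht1 : (t : ℂ) ∈ ball (0:ℂ) 1 := by simpa using ht
    refine (ofScalars ℂ c).le_radius_of_tendsto (l := 0) ?_
    simpa [ofScalars_norm] using (h _ ht1).summable.tendsto_atTop_zero.norm
  r_pos := one_pos
  hasSum {y} hy := by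
    have hy1 : ‖y‖ < 1 := by simpa [enorm_eq_nnnorm, ← NNReal.coe_lt_one] using hy
    simpa [ofScalars_apply_eq, mul_comm] using h y (mem_ball_zero_iff.mpr hy1)

lemma summable_norm_mul_pow_of_hasSum
    (h : ∀ z ∈ ball (0:ℂ) 1, HasSum (fun k => c k * z ^ k) (ψ z)) {z : ℂ} (hz : ‖z‖ < 1) :
    Summable fun k => ‖c k‖ * ‖z‖ ^ k := by
  have hr : (‖z‖₊ : ℝ≥0∞) < (ofScalars ℂ c).radius :=
    (ENNReal.coe_lt_one_iff.mpr hz).trans_le (hasFPowerSeriesOnBall_ofScalars_of_hasSum h).r_le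
  simpa [ofScalars_norm] using (ofScalars ℂ c).summable_norm_mul_pow hr

lemma eq_zero_of_hasSum_mul_pow_zero (h : ∀ z ∈ ball (0:ℂ) 1, HasSum (fun k => c k * z ^ k) 0) :
    c = 0 :=
  (ofScalars_series_eq_zero ℂ).mp
    (hasFPowerSeriesOnBall_ofScalars_of_hasSum (ψ := 0) h).hasFPowerSeriesAt.eq_zero

end PowerSeries

section DiscreteFourier

variable {m : ℕ} {ζ : ℂ}

lemma IsPrimitiveRoot.sum_pow_mul_conj_pow (hζ : IsPrimitiveRoot ζ m) {p q : ℕ}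
    (hp : p < m) (hq : q < m) :
    ∑ j ∈ range m, (ζ ^ p * conj ζ ^ q) ^ j = if p = q then (m : ℂ) else 0 := by
  have hconj : conj ζ = ζ⁻¹ := (Complex.inv_eq_conj (hζ.norm'_eq_one (by omega))).symm
  split_ifs with hpq
  · subst hpq
    simp [hconj, hζ.ne_zero (by omega)]
  · have hx1 : ζ ^ p * conj ζ ^ q ≠ 1 := by
      rw [hconj, inv_pow, Ne, mul_inv_eq_one₀ (pow_ne_zero _ (hζ.ne_zero (by omega)))]
      exact fun h => hpq (hζ.pow_inj hp hq h)
    have hxm : (ζ ^ p * conj ζ ^ q) ^ m = 1 := by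
      rw [mul_pow, ← pow_mul, ← pow_mul, mul_comm p, mul_comm q, pow_mul, pow_mul, ← map_pow,
        hζ.pow_eq_one]
      simp
    rw [geom_sum_eq hx1, hxm, sub_self, zero_div]

/-- Parseval's identity for the discrete Fourier transform of length `m`. -/
lemma IsPrimitiveRoot.sum_norm_sq_sum_mul_pow (hζ : IsPrimitiveRoot ζ m) {L : ℕ} (hL : L ≤ m)
    (h : ℕ → ℂ) :
    ∑ j ∈ range m, ‖∑ p ∈ range L, h p * ζ ^ (j * p)‖ ^ 2 = m * ∑ p ∈ range L, ‖h p‖ ^ 2 := by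
  apply Complex.ofReal_injective
  push_cast
  simp_rw [← Complex.mul_conj', map_sum, sum_mul_sum, mul_sum]
  calc ∑ j ∈ range m, ∑ p ∈ range L, ∑ q ∈ range L, h p * ζ ^ (j * p) * conj (h q * ζ ^ (j * q))
      = ∑ p ∈ range L, ∑ q ∈ range L,
          h p * conj (h q) * ∑ j ∈ range m, (ζ ^ p * conj ζ ^ q) ^ j := by
        rw [sum_comm]; refine sum_congr rfl fun p _ => ?_
        rw [sum_comm]; refine sum_congr rfl fun q _ => ?_
        rw [mul_sum]; refine sum_congr rfl fun j _ => ?_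
        simp only [map_mul, map_pow]; ring
    _ = ∑ p ∈ range L, (m : ℂ) * (h p * conj (h p)) := by
        refine sum_congr rfl fun p hp => ?_
        have hpm : p < m := (mem_range.mp hp).trans_le hL
        rw [sum_eq_single_of_mem p hp fun q hq hqp => by
          rw [hζ.sum_pow_mul_conj_pow hpm ((mem_range.mp hq).trans_le hL), if_neg (Ne.symm hqp),
            mul_zero]]
        rw [hζ.sum_pow_mul_conj_pow hpm hpm, if_pos rfl, mul_comm]

end DiscreteFourier

/-- For `d < N`, the `d`-th Taylor coefficient of `φ(B) (P_N f)`, where `b` are the Taylor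
coefficients of `φ` and `P_N f` is the truncation of `f` to the indices `< N`. -/
def truncCoeff (b f : ℕ → ℂ) (N d : ℕ) : ℂ := ∑ k ∈ range (N - d), b k * f (d + k)

lemma IsPrimitiveRoot.mul_truncCoeff_eq_sum {m : ℕ} {ω : ℂ} (hω : IsPrimitiveRoot ω m)
    (b f : ℕ → ℂ) {N K d : ℕ} (hNK : N ≤ K) (hm : N + K ≤ m) (hd : d < N) :
    (m : ℂ) * truncCoeff b f N d =
      ∑ j ∈ range m, (∑ n ∈ range N, f n * ω ^ (j * n)) *
        (∑ k ∈ range K, b k * conj ω ^ (j * k)) * conj ω ^ (d * j) := by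
  calc (m : ℂ) * truncCoeff b f N d
      = ∑ n ∈ range N, ∑ k ∈ range K, f n * b k * if n = k + d then (m : ℂ) else 0 := by
        rw [sum_comm]
        simp_rw [mul_ite, mul_zero, sum_ite_eq', mem_range]
        have hfilter : (range K).filter (· + d < N) = range (N - d) := by
          ext k; simp only [mem_filter, mem_range]; omega
        rw [truncCoeff, mul_sum, ← sum_filter, hfilter]
        exact sum_congr rfl fun k _ => by rw [add_comm]; ring
    _ = ∑ n ∈ range N, ∑ k ∈ range K,
          f n * b k * ∑ j ∈ range m, (ω ^ n * conj ω ^ (k + d)) ^ j := by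
        refine sum_congr rfl fun n hn => sum_congr rfl fun k hk => ?_
        rw [hω.sum_pow_mul_conj_pow (by simp at hn; omega) (by simp at hk; omega)]
    _ = _ := by
        simp_rw [sum_mul_sum, sum_mul]
        conv_rhs => rw [sum_comm]
        refine sum_congr rfl fun n _ => ?_
        rw [sum_comm]
        refine sum_congr rfl fun k _ => ?_
        rw [mul_sum]
        exact sum_congr rfl fun j _ => by ring

theorem sum_norm_sq_truncCoeff_le_of_polynomial (b f : ℕ → ℂ) {N K : ℕ} (hNK : N ≤ K) {M : ℝ}
    (hb : ∀ w : ℂ, ‖w‖ = 1 → ‖∑ k ∈ range K, b k * w ^ k‖ ≤ M) :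
    ∑ d ∈ range N, ‖truncCoeff b f N d‖ ^ 2 ≤ M ^ 2 * ∑ n ∈ range N, ‖f n‖ ^ 2 := by
  set m := N + K + 1
  have hm0 : m ≠ 0 := by omega
  set ω := Complex.exp (2 * Real.pi * Complex.I / m)
  have hω : IsPrimitiveRoot ω m := Complex.isPrimitiveRoot_exp m hm0
  have hω' : IsPrimitiveRoot (conj ω) m := by
    rw [← Complex.inv_eq_conj (hω.norm'_eq_one hm0)]; exact hω.inv
  set A : ℕ → ℂ := fun j => ∑ n ∈ range N, f n * ω ^ (j * n)
  set B : ℕ → ℂ := fun j => ∑ k ∈ range K, b k * conj ω ^ (j * k)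
  have hB : ∀ j, ‖B j‖ ≤ M := fun j => by
    simpa only [B, pow_mul] using hb (conj ω ^ j) (by simp [hω.norm'_eq_one hm0])
  have hM : 0 ≤ M := (norm_nonneg _).trans (hB 0)
  have key : (m : ℝ) ^ 2 * ∑ d ∈ range N, ‖truncCoeff b f N d‖ ^ 2
      ≤ (m : ℝ) ^ 2 * (M ^ 2 * ∑ n ∈ range N, ‖f n‖ ^ 2) :=
    calc (m : ℝ) ^ 2 * ∑ d ∈ range N, ‖truncCoeff b f N d‖ ^ 2
        = ∑ d ∈ range N, ‖∑ j ∈ range m, A j * B j * conj ω ^ (d * j)‖ ^ 2 := by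
          rw [mul_sum]
          refine sum_congr rfl fun d hd => ?_
          rw [← hω.mul_truncCoeff_eq_sum b f hNK (by omega) (mem_range.mp hd), norm_mul,
            Complex.norm_natCast]
          ring
      _ ≤ ∑ d ∈ range m, ‖∑ j ∈ range m, A j * B j * conj ω ^ (d * j)‖ ^ 2 :=
          sum_le_sum_of_subset_of_nonneg (range_subset_range.mpr (by omega))
            fun _ _ _ => by positivity
      _ = m * ∑ j ∈ range m, ‖A j * B j‖ ^ 2 :=
          hω'.sum_norm_sq_sum_mul_pow le_rfl fun j => A j * B j
      _ ≤ m * ∑ j ∈ range m, M ^ 2 * ‖A j‖ ^ 2 := by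
          gcongr with j
          rw [norm_mul, mul_pow, mul_comm]
          gcongr
          exact hB j
      _ = (m : ℝ) ^ 2 * (M ^ 2 * ∑ n ∈ range N, ‖f n‖ ^ 2) := by
          rw [← mul_sum, hω.sum_norm_sq_sum_mul_pow (by omega)]
          ring
  exact le_of_mul_le_mul_left key (by positivity)

lemma norm_sum_range_le_of_hasSum {E : Type*} [NormedAddCommGroup E] {g : ℕ → E} {v : E}
    (hg : HasSum g v) (hs : Summable fun k => ‖g k‖) (K : ℕ) :
    ‖∑ k ∈ range K, g k‖ ≤ ‖v‖ + ∑' k, ‖g (k + K)‖ :=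
  calc ‖∑ k ∈ range K, g k‖ = ‖v - ∑' k, g (k + K)‖ := by
        rw [← hg.tsum_eq, ← hg.summable.sum_add_tsum_nat_add K, add_sub_cancel_right]
    _ ≤ ‖v‖ + ‖∑' k, g (k + K)‖ := norm_sub_le _ _
    _ ≤ ‖v‖ + ∑' k, ‖g (k + K)‖ := by
        gcongr; exact norm_tsum_le_tsum_norm ((summable_nat_add_iff K).mpr hs)

section CoToeplitzBound

variable {c : ℕ → ℂ} {ψ : ℂ → ℂ} {M : ℝ}

lemma sum_norm_sq_truncCoeff_mul_pow_le
    (hψ : ∀ z ∈ ball (0:ℂ) 1, HasSum (fun k => c k * z ^ k) (ψ z))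
    (hM : ∀ z ∈ ball (0:ℂ) 1, ‖ψ z‖ ≤ M) {r : ℝ} (hr0 : 0 ≤ r) (hr1 : r < 1) (f : ℕ → ℂ)
    (N : ℕ) :
    ∑ d ∈ range N, ‖truncCoeff (fun k => c k * (r : ℂ) ^ k) f N d‖ ^ 2
      ≤ M ^ 2 * ∑ n ∈ range N, ‖f n‖ ^ 2 := by
  set tail : ℕ → ℝ := fun K => ∑' k, ‖c (k + K)‖ * r ^ (k + K)
  have hbound : ∀ K ≥ N, ∑ d ∈ range N, ‖truncCoeff (fun k => c k * (r : ℂ) ^ k) f N d‖ ^ 2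
      ≤ (M + tail K) ^ 2 * ∑ n ∈ range N, ‖f n‖ ^ 2 := fun K hK =>
    sum_norm_sq_truncCoeff_le_of_polynomial _ f hK fun w hw => by
      have hz : ‖(r : ℂ) * w‖ = r := by simp [hw, abs_of_nonneg hr0]
      have hzb : (r : ℂ) * w ∈ ball (0:ℂ) 1 := mem_ball_zero_iff.mpr (hz.trans_lt hr1)
      have h := norm_sum_range_le_of_hasSum (hψ _ hzb)
        (by simpa only [norm_mul (c _), norm_pow, hz]
          using summable_norm_mul_pow_of_hasSum hψ (hz.trans_lt hr1)) K
      simp only [norm_mul (c _), norm_pow, hz] at h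
      simp only [mul_assoc, ← mul_pow]
      linarith [hM _ hzb]
  have htail : Tendsto (fun K => (M + tail K) ^ 2 * ∑ n ∈ range N, ‖f n‖ ^ 2) atTop
      (𝓝 (M ^ 2 * ∑ n ∈ range N, ‖f n‖ ^ 2)) := by
    simpa using (((tendsto_const_nhds (x := M)).add
      (tendsto_sum_nat_add fun k => ‖c k‖ * r ^ k)).pow 2).mul_const (∑ n ∈ range N, ‖f n‖ ^ 2)
  exact ge_of_tendsto htail (eventually_atTop.mpr ⟨N, hbound⟩)

theorem sum_norm_sq_truncCoeff_le
    (hψ : ∀ z ∈ ball (0:ℂ) 1, HasSum (fun k => c k * z ^ k) (ψ z))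
    (hM : ∀ z ∈ ball (0:ℂ) 1, ‖ψ z‖ ≤ M) (f : ℕ → ℂ) (N : ℕ) :
    ∑ d ∈ range N, ‖truncCoeff c f N d‖ ^ 2 ≤ M ^ 2 * ∑ n ∈ range N, ‖f n‖ ^ 2 := by
  have hcont : Continuous fun r : ℝ =>
      ∑ d ∈ range N, ‖truncCoeff (fun k => c k * (r : ℂ) ^ k) f N d‖ ^ 2 := by
    unfold truncCoeff; fun_prop
  have hev : ∀ᶠ r : ℝ in 𝓝[<] 1,
      ∑ d ∈ range N, ‖truncCoeff (fun k => c k * (r : ℂ) ^ k) f N d‖ ^ 2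
        ≤ M ^ 2 * ∑ n ∈ range N, ‖f n‖ ^ 2 := by
    filter_upwards [Ioo_mem_nhdsLT one_pos] with r hr
    exact sum_norm_sq_truncCoeff_mul_pow_le hψ hM hr.1.le hr.2 f N
  simpa using le_of_tendsto ((hcont.tendsto 1).mono_left nhdsWithin_le_nhds) hev

end CoToeplitzBound

lemma memℓp_two_of_sum_range_le {g : ℕ → ℂ} {C : ℝ} (h : ∀ N, ∑ n ∈ range N, ‖g n‖ ^ 2 ≤ C) :
    Memℓp g 2 :=
  memℓp_gen (by simpa using summable_of_sum_range_le (fun n => by positivity) h)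

namespace H2

instance : Nontrivial H2 :=
  ⟨⟨lp.single 2 0 1, 0, fun h => by simpa using congrArg (fun f : H2 => f 0) h⟩⟩

lemma summable_norm_sq (f : H2) : Summable fun n => ‖f n‖ ^ 2 := by
  simpa using (lp.memℓp f).summable (by norm_num : 0 < (2 : ℝ≥0∞).toReal)

lemma norm_sq_eq_tsum (f : H2) : ‖f‖ ^ 2 = ∑' n, ‖f n‖ ^ 2 := by
  simpa using lp.norm_rpow_eq_tsum (by norm_num : 0 < (2 : ℝ≥0∞).toReal) f

lemma norm_le_of_sum_range_le {f : H2} {C : ℝ} (hC : 0 ≤ C)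
    (h : ∀ N, ∑ n ∈ range N, ‖f n‖ ^ 2 ≤ C ^ 2) : ‖f‖ ≤ C :=
  pow_le_pow_iff_left₀ (norm_nonneg f) hC two_ne_zero |>.mp <| by
    rw [norm_sq_eq_tsum]; exact Real.tsum_le_of_sum_range_le (fun n => by positivity) h

end H2

section CoToeplitzOperator

variable {c : ℕ → ℂ} {ψ : ℂ → ℂ} {M : ℝ}

lemma exists_hasSum_mul_pow_of_differentiableOn (hd : DifferentiableOn ℂ ψ (ball (0:ℂ) 1)) :
    ∃ c : ℕ → ℂ, ∀ z ∈ ball (0:ℂ) 1, HasSum (fun k => c k * z ^ k) (ψ z) :=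
  ⟨fun k => (k.factorial : ℂ)⁻¹ * iteratedDeriv k ψ 0, fun z hz => by
    simpa [smul_eq_mul, mul_comm, mul_left_comm] using Complex.hasSum_taylorSeries_on_ball hd hz⟩

lemma sum_range_norm_sq_le_of_hasSum
    (hψ : ∀ z ∈ ball (0:ℂ) 1, HasSum (fun k => c k * z ^ k) (ψ z))
    (hM : ∀ z ∈ ball (0:ℂ) 1, ‖ψ z‖ ≤ M) (N : ℕ) :
    ∑ k ∈ range N, ‖c k‖ ^ 2 ≤ M ^ 2 := by
  rcases N.eq_zero_or_pos with rfl | hN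
  · simpa using sq_nonneg M
  -- the truncated co-Toeplitz operator maps `e_{N-1}` to the reversed coefficient vector
  set e : ℕ → ℂ := fun n => if n = N - 1 then 1 else 0
  have htrunc : ∀ d < N, truncCoeff c e N d = c (N - 1 - d) := fun d hd => by
    rw [truncCoeff, sum_eq_single_of_mem (N - 1 - d) (mem_range.mpr (by omega))]
    · simp [e, show d + (N - 1 - d) = N - 1 by omega]
    · intro k _ hk
      simp [e, show d + k ≠ N - 1 by omega]
  have he : ∑ n ∈ range N, ‖e n‖ ^ 2 = 1 := by
    rw [sum_eq_single_of_mem (N - 1) (mem_range.mpr (by omega))] <;> simp +contextual [e]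
  have h := sum_norm_sq_truncCoeff_le hψ hM e N
  rwa [he, mul_one, sum_congr rfl fun d hd => by rw [htrunc d (mem_range.mp hd)],
    sum_range_reflect (fun k => ‖c k‖ ^ 2)] at h

lemma summable_mul_of_summable_norm_sq {a b : ℕ → ℂ} (ha : Summable fun k => ‖a k‖ ^ 2)
    (hb : Summable fun k => ‖b k‖ ^ 2) : Summable fun k => a k * b k :=
  .of_norm <| ((ha.add hb).div_const 2).of_nonneg_of_le (fun _ => norm_nonneg _) fun k => by
    rw [norm_mul]; nlinarith [sq_nonneg (‖a k‖ - ‖b k‖)]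

lemma sum_range_norm_sq_tsum_le
    (hψ : ∀ z ∈ ball (0:ℂ) 1, HasSum (fun k => c k * z ^ k) (ψ z))
    (hM : ∀ z ∈ ball (0:ℂ) 1, ‖ψ z‖ ≤ M) {f : ℕ → ℂ} (hf : Summable fun n => ‖f n‖ ^ 2)
    (hs : ∀ d, Summable fun k => c k * f (d + k)) (N₀ : ℕ) :
    ∑ d ∈ range N₀, ‖∑' k, c k * f (d + k)‖ ^ 2 ≤ M ^ 2 * ∑' n, ‖f n‖ ^ 2 := by
  have hlim : Tendsto (fun N => ∑ d ∈ range N₀, ‖truncCoeff c f N d‖ ^ 2) atTop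
      (𝓝 (∑ d ∈ range N₀, ‖∑' k, c k * f (d + k)‖ ^ 2)) :=
    tendsto_finsetSum _ fun d _ =>
      (((hs d).hasSum.tendsto_sum_nat.comp (tendsto_sub_atTop_nat d)).norm).pow 2
  refine le_of_tendsto hlim (eventually_atTop.mpr ⟨N₀, fun N hN => ?_⟩)
  calc ∑ d ∈ range N₀, ‖truncCoeff c f N d‖ ^ 2
      ≤ ∑ d ∈ range N, ‖truncCoeff c f N d‖ ^ 2 :=
        sum_le_sum_of_subset_of_nonneg (range_subset_range.mpr hN) fun _ _ _ => by positivity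
    _ ≤ M ^ 2 * ∑ n ∈ range N, ‖f n‖ ^ 2 := sum_norm_sq_truncCoeff_le hψ hM f N
    _ ≤ M ^ 2 * ∑' n, ‖f n‖ ^ 2 := by
        gcongr; exact hf.sum_le_tsum _ fun _ _ => by positivity

theorem exists_isCoToeplitz_norm_le (hd : DifferentiableOn ℂ ψ (ball (0:ℂ) 1))
    (hM : ∀ z ∈ ball (0:ℂ) 1, ‖ψ z‖ ≤ M) : ∃ G : H2 →L[ℂ] H2, IsCoToeplitz ψ G ∧ ‖G‖ ≤ M := by
  obtain ⟨c, hc⟩ := exists_hasSum_mul_pow_of_differentiableOn hd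
  have hM0 : 0 ≤ M := (norm_nonneg _).trans (hM 0 (mem_ball_self one_pos))
  have hc2 : Summable fun k => ‖c k‖ ^ 2 :=
    summable_of_sum_range_le (fun _ => by positivity) (sum_range_norm_sq_le_of_hasSum hc hM)
  have hs : ∀ (f : H2) n, Summable fun k => c k * f (n + k) := fun f n =>
    summable_mul_of_summable_norm_sq hc2 <| by
      simpa only [add_comm n] using (summable_nat_add_iff n).mpr (H2.summable_norm_sq f)
  have hbound : ∀ (f : H2) N, ∑ d ∈ range N, ‖∑' k, c k * f (d + k)‖ ^ 2 ≤ (M * ‖f‖) ^ 2 :=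
    fun f N => by
      rw [mul_pow, H2.norm_sq_eq_tsum]
      exact sum_range_norm_sq_tsum_le hc hM (H2.summable_norm_sq f) (hs f) N
  let G : H2 →ₗ[ℂ] H2 :=
    { toFun := fun f => ⟨fun n => ∑' k, c k * f (n + k), memℓp_two_of_sum_range_le (hbound f)⟩
      map_add' := fun f g => lp.ext <| funext fun n => by
        simp only [lp.coeFn_add, Pi.add_apply, mul_add]
        exact (hs f n).tsum_add (hs g n)
      map_smul' := fun a f => lp.ext <| funext fun n => by
        simp only [lp.coeFn_smul, Pi.smul_apply, smul_eq_mul, RingHom.id_apply, mul_left_comm _ a]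
        exact tsum_mul_left }
  have hG : ∀ f, ‖G f‖ ≤ M * ‖f‖ := fun f =>
    H2.norm_le_of_sum_range_le (by positivity) (hbound f)
  exact ⟨G.mkContinuous M hG, ⟨c, hc, fun f n => (hs f n).hasSum⟩, G.mkContinuous_norm_le hM0 hG⟩

end CoToeplitzOperator

lemma exists_isDilation {μ : ℂ} (hμ : ‖μ‖ = 1) : ∃ D : H2 →L[ℂ] H2, IsDilation μ D ∧ ‖D‖ ≤ 1 := by
  have hnorm : ∀ (f : H2) n, ‖μ ^ n * f n‖ = ‖f n‖ := by simp [hμ]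
  have hbound : ∀ (f : H2) N, ∑ n ∈ range N, ‖μ ^ n * f n‖ ^ 2 ≤ (1 * ‖f‖) ^ 2 := fun f N => by
    simp only [hnorm, one_mul, H2.norm_sq_eq_tsum]
    exact (H2.summable_norm_sq f).sum_le_tsum _ fun _ _ => by positivity
  let D : H2 →ₗ[ℂ] H2 :=
    { toFun := fun f => ⟨fun n => μ ^ n * f n, memℓp_two_of_sum_range_le (hbound f)⟩
      map_add' := fun f g => lp.ext <| funext fun n => mul_add _ _ _
      map_smul' := fun a f => lp.ext <| funext fun n => by simp [mul_left_comm] }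
  have hD : ∀ f, ‖D f‖ ≤ 1 * ‖f‖ := fun f => H2.norm_le_of_sum_range_le (by positivity) (hbound f)
  exact ⟨D.mkContinuous 1 hD, fun f n => rfl, D.mkContinuous_norm_le zero_le_one hD⟩

lemma kernelVec_apply {a : ℂ} (ha : ‖a‖ < 1) (n : ℕ) : kernelVec a n = conj a ^ n := by
  simp [kernelVec, ha]

lemma IsDilation.apply_kernelVec {μ : ℂ} {R : H2 →L[ℂ] H2} (hR : IsDilation μ R) (hμ : ‖μ‖ = 1)
    {a : ℂ} (ha : ‖a‖ < 1) : R (kernelVec a) = kernelVec (conj μ * a) := by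
  have ha' : ‖conj μ * a‖ < 1 := by simpa [hμ] using ha
  exact lp.ext <| funext fun n => by
    rw [hR, kernelVec_apply ha, kernelVec_apply ha', map_mul, Complex.conj_conj, mul_pow]

lemma IsCoToeplitz.apply_kernelVec {φ : ℂ → ℂ} {Φ : H2 →L[ℂ] H2} (hΦ : IsCoToeplitz φ Φ)
    {a : ℂ} (ha : ‖a‖ < 1) : Φ (kernelVec a) = φ (conj a) • kernelVec a := by
  obtain ⟨c, hc, hΦc⟩ := hΦ
  refine lp.ext <| funext fun n => (hΦc _ n).unique ?_
  simpa [kernelVec_apply ha, pow_add, mul_left_comm, mul_comm (φ _)] using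
    (hc (conj a) (by simpa using ha)).mul_left (conj a ^ n)

lemma dense_span_kernelVec : Dense (Submodule.span ℂ (kernelVec '' ball (0:ℂ) 1) : Set H2) := by
  rw [Submodule.dense_iff_topologicalClosure_eq_top, Submodule.topologicalClosure_eq_top_iff,
    Submodule.eq_bot_iff]
  intro g hg
  have hzero : ∀ z ∈ ball (0:ℂ) 1, HasSum (fun n => g n * z ^ n) 0 := fun z hz => by
    have h := lp.hasSum_inner (𝕜 := ℂ) (kernelVec z) g
    rw [(Submodule.mem_orthogonal _ g).mp hg _ (Submodule.subset_span ⟨z, hz, rfl⟩)] at h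
    simpa [kernelVec_apply (mem_ball_zero_iff.mp hz), mul_comm] using h
  exact lp.ext (eq_zero_of_hasSum_mul_pow_zero hzero)

lemma pow_comp_apply_kernelVec {lam : ℂ} (hlam : ‖lam‖ = 1) {φ : ℂ → ℂ} {R Φ : H2 →L[ℂ] H2}
    (hR : IsDilation lam R) (hΦ : IsCoToeplitz φ Φ) (n : ℕ) {a : ℂ} (ha : ‖a‖ < 1) :
    ((R ∘L Φ) ^ n) (kernelVec a) =
      (∏ j ∈ range n, φ (lam ^ j * conj a)) • kernelVec (conj lam ^ n * a) := by
  induction n with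
  | zero => simp
  | succ n ih =>
    have hn : ‖conj lam ^ n * a‖ < 1 := by simpa [hlam] using ha
    rw [pow_succ', mul_apply_eq_comp, ih, map_smul, ContinuousLinearMap.comp_apply,
      hΦ.apply_kernelVec hn, map_smul, hR.apply_kernelVec hlam hn, smul_smul, prod_range_succ,
      ← mul_assoc, ← pow_succ']
    simp

lemma exists_inverse_of_apply_kernelVec {A : H2 →L[ℂ] H2} {μ : ℂ} (hμ : ‖μ‖ = 1) {g : ℂ → ℂ}
    (hg : DifferentiableOn ℂ g (ball (0:ℂ) 1)) {c : ℝ} (hc : 0 < c)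
    (hgc : ∀ z ∈ ball (0:ℂ) 1, c ≤ ‖g z‖)
    (hA : ∀ a : ℂ, ‖a‖ < 1 → A (kernelVec a) = g (conj a) • kernelVec (conj μ * a)) :
    ∃ S : H2 →L[ℂ] H2, A ∘L S = 1 ∧ S ∘L A = 1 ∧ ‖S‖ ≤ 1 / c := by
  have hg0 : ∀ {z : ℂ}, ‖z‖ < 1 → g z ≠ 0 := fun hz h => by
    have := hgc _ (mem_ball_zero_iff.mpr hz); rw [h, norm_zero] at this; linarith
  obtain ⟨G, hG, hGn⟩ := exists_isCoToeplitz_norm_le (ψ := fun z => (g z)⁻¹) (M := 1 / c)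
    (hg.inv fun z hz => hg0 (mem_ball_zero_iff.mp hz)) fun z hz => by
      rw [norm_inv, one_div]; exact inv_anti₀ hc (hgc z hz)
  have hμ' : ‖conj μ‖ = 1 := by simpa using hμ
  obtain ⟨D, hD, hDn⟩ := exists_isDilation hμ'
  have hμμ : conj μ * μ = 1 := by simp [Complex.conj_mul', hμ]
  refine ⟨G ∘L D, ContinuousLinearMap.ext_on dense_span_kernelVec ?_,
    ContinuousLinearMap.ext_on dense_span_kernelVec ?_, ?_⟩
  · rintro _ ⟨a, ha, rfl⟩
    have ha : ‖a‖ < 1 := mem_ball_zero_iff.mp ha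
    have hμa : ‖μ * a‖ < 1 := by simpa [hμ] using ha
    rw [ContinuousLinearMap.comp_apply, ContinuousLinearMap.comp_apply,
      hD.apply_kernelVec hμ' ha, Complex.conj_conj, hG.apply_kernelVec hμa, map_smul, hA _ hμa,
      smul_smul, ← mul_assoc, hμμ, one_mul, inv_mul_cancel₀ (hg0 (by simpa using hμa)), one_smul]
    rfl
  · rintro _ ⟨a, ha, rfl⟩
    have ha : ‖a‖ < 1 := mem_ball_zero_iff.mp ha
    have hμa : ‖conj μ * a‖ < 1 := by simpa [hμ] using ha
    rw [ContinuousLinearMap.comp_apply, ContinuousLinearMap.comp_apply, hA _ ha, map_smul,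
      map_smul, hD.apply_kernelVec hμ' hμa, Complex.conj_conj, ← mul_assoc, mul_comm μ, hμμ,
      one_mul, hG.apply_kernelVec ha, smul_smul, mul_inv_cancel₀ (hg0 (by simpa using ha)),
      one_smul]
    rfl
  · calc ‖G ∘L D‖ ≤ ‖G‖ * ‖D‖ := ContinuousLinearMap.opNorm_comp_le _ _
      _ ≤ 1 / c * 1 := mul_le_mul hGn hDn (norm_nonneg _) (by positivity)
      _ = 1 / c := mul_one _

section Orbits

variable {𝕜 E : Type*} [NontriviallyNormedField 𝕜] [NormedAddCommGroup E] [NormedSpace 𝕜 E]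

lemma mul_norm_le_norm_apply_of_comp_eq_one {A S : E →L[𝕜] E} (hS : S ∘L A = 1) {c : ℝ}
    (hc : 0 < c) (hSc : ‖S‖ ≤ 1 / c) (x : E) : c * ‖x‖ ≤ ‖A x‖ := by
  have hx : ‖x‖ ≤ 1 / c * ‖A x‖ :=
    calc ‖x‖ = ‖S (A x)‖ := by rw [← ContinuousLinearMap.comp_apply, hS]; rfl
      _ ≤ ‖S‖ * ‖A x‖ := S.le_opNorm _
      _ ≤ 1 / c * ‖A x‖ := by gcongr
  rwa [div_mul_eq_mul_div, one_mul, le_div_iff₀' hc] at hx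

lemma not_dense_orbit_of_mul_norm_le [Nontrivial E] (T : E →L[𝕜] E) {c : ℝ} (hc : 0 < c)
    {n₀ : ℕ} (h : ∀ n, n₀ ≤ n → ∀ x, c * ‖x‖ ≤ ‖(T ^ n) x‖) (x : E) :
    ¬ Dense (Set.range fun n => (T ^ n) x) := by
  intro hd
  have hx : x ≠ 0 := by
    rintro rfl
    obtain ⟨y, hy⟩ := exists_ne (0 : E)
    have h0 := hd.closure_eq
    simp only [map_zero, Set.range_const, closure_singleton] at h0
    exact hy (Set.eq_univ_iff_forall.mp h0 y)
  have : ∀ y : E, (𝓝[≠] y).NeBot := Module.punctured_nhds_neBot 𝕜 E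
  have hfin : ((fun n => (T ^ n) x) '' Set.Iio n₀).Finite := (Set.finite_Iio n₀).image _
  have hsub : Set.range (fun n => (T ^ n) x) \ (fun n => (T ^ n) x) '' Set.Iio n₀ ⊆
      {y | c * ‖x‖ ≤ ‖y‖} := by
    rintro _ ⟨⟨n, rfl⟩, hn⟩
    exact h n (not_lt.mp fun hlt => hn ⟨n, hlt, rfl⟩) x
  have hclosed : IsClosed {y : E | c * ‖x‖ ≤ ‖y‖} := isClosed_le continuous_const continuous_norm
  have h0 : (0 : E) ∈ {y : E | c * ‖x‖ ≤ ‖y‖} := by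
    rw [← hclosed.closure_eq, ((hd.sdiff_finite hfin).mono hsub).closure_eq]; trivial
  have : 0 < c * ‖x‖ := mul_pos hc (norm_pos_iff.mpr hx)
  simp only [Set.mem_ofPred_eq, norm_zero] at h0
  linarith

end Orbits

theorem stmt6 (lam : ℂ) (hlam : ‖lam‖ = 1) (φ : ℂ → ℂ) (hφ : InHinf φ)
    (R Φ T : H2 →L[ℂ] H2) (hR : IsDilation lam R) (hΦ : IsCoToeplitz φ Φ)
    (hT : T = R ∘L Φ)
    (c : ℝ) (hc : 0 < c) (n₀ : ℕ)
    (hlow : ∀ n : ℕ, n₀ ≤ n → ∀ z ∈ ball (0:ℂ) 1,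
      c ≤ ‖∏ j ∈ Finset.range n, φ (lam ^ j * z)‖) :
    (∀ n : ℕ, n₀ ≤ n →
      ∃ S : H2 →L[ℂ] H2, (T ^ n) ∘L S = 1 ∧ S ∘L (T ^ n) = 1 ∧ ‖S‖ ≤ 1 / c) ∧
    ¬ Hypercyclic T := by
  subst hT
  have hΦn : ∀ n, DifferentiableOn ℂ (fun z => ∏ j ∈ range n, φ (lam ^ j * z)) (ball (0:ℂ) 1) :=
    fun n => DifferentiableOn.fun_finsetProd fun j _ =>
      hφ.1.comp (differentiableOn_id.const_mul _) fun z hz => by simpa [hlam] using hz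
  have hinv : ∀ n : ℕ, n₀ ≤ n → ∃ S : H2 →L[ℂ] H2,
      ((R ∘L Φ) ^ n) ∘L S = 1 ∧ S ∘L ((R ∘L Φ) ^ n) = 1 ∧ ‖S‖ ≤ 1 / c := fun n hn =>
    exists_inverse_of_apply_kernelVec (μ := lam ^ n) (by simp [hlam]) (hΦn n) hc (hlow n hn)
      fun a ha => by rw [pow_comp_apply_kernelVec hlam hR hΦ n ha, map_pow]
  refine ⟨hinv, fun ⟨x, hx⟩ => not_dense_orbit_of_mul_norm_le _ hc (n₀ := n₀) ?_ x hx⟩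
  intro n hn
  obtain ⟨S, -, hS, hSc⟩ := hinv n hn
  exact mul_norm_le_norm_apply_of_comp_eq_one hS hc hSc
end
end

section
/- Let λ ∈ ℂ with 0 < |λ| < 1, let φ ∈ H²(𝔻) with φ(0) ≠ 0, and let T = R_λ φ(B) be the corresponding bounded extended λ-eigenoperator of B on H²(𝔻) (equivalently, T* = M_{φ̄} R_{conj(λ)}). Then T is not supercyclic on H²(𝔻). -/
open Complex Metric Filter Topology ComplexConjugate

noncomputable section

/-!
The adjoint `T* f (z) = φ̄(z) f(λ̄ z)` is lower triangular in the monomial basis, with diagonal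
`φ̄(0) λ̄ᵖ`, and solving the triangular system gives, for each `p`, an eigenvector `gₚ ∈ H²` with
that eigenvalue: the recursion for its coefficients is a convolution with the coefficients of `φ̄`,
which a discrete Grönwall bound makes bounded and then Young's inequality `ℓ¹ * ℓ² ⊆ ℓ²` square
summable. Pairing a projective orbit `μ Tⁿ x` with `g₀` and `g₁` gives `μ φ(0)ⁿ ⟪g₀, x⟫` and
`μ φ(0)ⁿ λⁿ ⟪g₁, x⟫`, whose moduli have a bounded ratio; but the ratio is unbounded near points
where `⟪g₀, ·⟫` vanishes and `⟪g₁, ·⟫` does not, and these exist as the eigenvalues differ.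
-/

open Finset

section Supercyclicity

variable {𝕜 X : Type*} [NormedField 𝕜] [AddCommGroup X] [Module 𝕜 X] [TopologicalSpace X]

lemma ContinuousLinearMap.apply_pow_apply_eq_pow_mul {T : X →L[𝕜] X} {ℓ : X →L[𝕜] 𝕜}
    {a : 𝕜} (hℓ : ∀ y, ℓ (T y) = a * ℓ y) (n : ℕ) (y : X) : ℓ ((T ^ n) y) = a ^ n * ℓ y := by
  induction n with
  | zero => simp
  | succ n ih => rw [pow_succ', mul_apply_eq_comp, hℓ, ih, pow_succ']; ring

/-- Along a dense projective orbit `|ℓ₀ x| |ℓ₁ y| ≤ |ℓ₁ x| |ℓ₀ y|`, hence everywhere by density;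
this fails at `T y - a y`, which `ℓ₀` kills but `ℓ₁` does not. -/
theorem not_dense_projective_orbit_of_eigenfunctionals {T : X →L[𝕜] X} {ℓ₀ ℓ₁ : X →L[𝕜] 𝕜}
    {a c : 𝕜} (h₀ : ∀ y, ℓ₀ (T y) = a * ℓ₀ y) (h₁ : ∀ y, ℓ₁ (T y) = c * ℓ₁ y)
    (hℓ₀ : ℓ₀ ≠ 0) (hℓ₁ : ℓ₁ ≠ 0) (hca : ‖c‖ < ‖a‖) :
    ¬ ∃ x : X, Dense {y : X | ∃ (μ : 𝕜) (n : ℕ), y = μ • (T ^ n) x} := by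
  rintro ⟨x, hx⟩
  have hx₀ : ℓ₀ x ≠ 0 := by
    refine fun h => hℓ₀ (ContinuousLinearMap.ext fun y =>
      congrFun (Continuous.ext_on hx ℓ₀.continuous (continuous_const (y := 0)) ?_) y)
    rintro _ ⟨μ, n, rfl⟩
    simp only [map_smul, ContinuousLinearMap.apply_pow_apply_eq_pow_mul h₀, h, mul_zero,
      smul_zero]
  have hcone : ∀ y, ‖ℓ₀ x‖ * ‖ℓ₁ y‖ ≤ ‖ℓ₁ x‖ * ‖ℓ₀ y‖ := by
    have hclosed : IsClosed {y | ‖ℓ₀ x‖ * ‖ℓ₁ y‖ ≤ ‖ℓ₁ x‖ * ‖ℓ₀ y‖} :=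
      isClosed_le (by fun_prop) (by fun_prop)
    intro y
    refine hclosed.closure_subset_iff.mpr ?_ (hx.closure_eq ▸ Set.mem_univ y)
    rintro _ ⟨μ, n, rfl⟩
    simp only [Set.mem_ofPred_eq, map_smul, smul_eq_mul, norm_mul, norm_pow,
      ContinuousLinearMap.apply_pow_apply_eq_pow_mul h₀,
      ContinuousLinearMap.apply_pow_apply_eq_pow_mul h₁]
    have : ‖c‖ ^ n ≤ ‖a‖ ^ n := pow_le_pow_left₀ (norm_nonneg c) hca.le n
    calc ‖ℓ₀ x‖ * (‖μ‖ * (‖c‖ ^ n * ‖ℓ₁ x‖)) = ‖c‖ ^ n * (‖μ‖ * ‖ℓ₀ x‖ * ‖ℓ₁ x‖) := by ring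
      _ ≤ ‖a‖ ^ n * (‖μ‖ * ‖ℓ₀ x‖ * ‖ℓ₁ x‖) := by gcongr
      _ = ‖ℓ₁ x‖ * (‖μ‖ * (‖a‖ ^ n * ‖ℓ₀ x‖)) := by ring
  refine hℓ₁ (ContinuousLinearMap.ext fun y => ?_)
  have hca' : c - a ≠ 0 := sub_ne_zero.mpr fun h => hca.ne (h ▸ rfl)
  have key := hcone (T y - a • y)
  simp only [map_sub, map_smul, h₀, h₁, smul_eq_mul, sub_self, norm_zero, mul_zero] at key
  rw [← sub_mul, norm_mul] at key
  simpa [hx₀, hca'] using le_antisymm key (by positivity)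

end Supercyclicity

theorem not_dense_projective_orbit_of_adjoint_eigenvectors {E : Type*} [NormedAddCommGroup E]
    [InnerProductSpace ℂ E] [CompleteSpace E] {T : E →L[ℂ] E} {g₀ g₁ : E} {c₀ c₁ : ℂ}
    (h₀ : ContinuousLinearMap.adjoint T g₀ = c₀ • g₀)
    (h₁ : ContinuousLinearMap.adjoint T g₁ = c₁ • g₁)
    (hg₀ : g₀ ≠ 0) (hg₁ : g₁ ≠ 0) (hc : ‖c₁‖ < ‖c₀‖) :
    ¬ ∃ x : E, Dense {y : E | ∃ (μ : ℂ) (n : ℕ), y = μ • (T ^ n) x} := by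
  have key : ∀ {g : E} {c : ℂ}, ContinuousLinearMap.adjoint T g = c • g →
      ∀ y, innerSL ℂ g (T y) = conj c * innerSL ℂ g y := fun h y => by
    rw [innerSL_apply_apply, innerSL_apply_apply, ← ContinuousLinearMap.adjoint_inner_left, h,
      inner_smul_left]
  have hne : ∀ {g : E}, g ≠ 0 → innerSL ℂ g ≠ 0 := fun {g} hg h =>
    hg (by simpa using congrArg (· g) h)
  exact not_dense_projective_orbit_of_eigenfunctionals (key h₀) (key h₁) (hne hg₀) (hne hg₁)
    (by simpa using hc)

lemma sum_range_le_mul_exp_of_le_mul_sum {x w : ℕ → ℝ} (hx : ∀ k, 0 ≤ x k) {N : ℕ}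
    (h : ∀ m, N ≤ m → x m ≤ w m * ∑ k ∈ range m, x k) {m : ℕ} (hm : N ≤ m) :
    ∑ k ∈ range m, x k ≤ (∑ k ∈ range N, x k) * Real.exp (∑ k ∈ Ico N m, w k) := by
  induction m, hm using Nat.le_induction with
  | base => simp
  | succ m hm ih =>
    have hS : 0 ≤ ∑ k ∈ range m, x k := sum_nonneg fun k _ => hx k
    calc ∑ k ∈ range (m + 1), x k ≤ (∑ k ∈ range m, x k) * Real.exp (w m) := by
          rw [sum_range_succ]
          nlinarith [h m hm, Real.add_one_le_exp (w m)]
      _ ≤ (∑ k ∈ range N, x k) * Real.exp (∑ k ∈ Ico N m, w k) * Real.exp (w m) := by gcongr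
      _ = (∑ k ∈ range N, x k) * Real.exp (∑ k ∈ Ico N (m + 1), w k) := by
          rw [sum_Ico_succ_top hm, Real.exp_add, mul_assoc]

lemma summable_sq_sum_range_mul {a c : ℕ → ℝ} (ha₀ : ∀ k, 0 ≤ a k) (ha : Summable a)
    (hc : Summable fun n => c n ^ 2) :
    Summable fun m => (∑ k ∈ range (m + 1), a k * c (m - k)) ^ 2 := by
  have hconv : Summable fun m => ∑ k ∈ range (m + 1), a k * c (m - k) ^ 2 := by
    refine (summable_norm_sum_mul_range_of_summable_norm (f := a) (g := fun n => c n ^ 2)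
      ?_ ?_).of_norm
    · simpa [Real.norm_eq_abs, abs_of_nonneg (ha₀ _)] using ha
    · simpa [Real.norm_eq_abs] using hc
  refine .of_nonneg_of_le (fun m => sq_nonneg _) (fun m => ?_) (hconv.mul_left (∑' k, a k))
  calc (∑ k ∈ range (m + 1), a k * c (m - k)) ^ 2
      ≤ (∑ k ∈ range (m + 1), a k) * ∑ k ∈ range (m + 1), a k * c (m - k) ^ 2 :=
        sum_sq_le_sum_mul_sum_of_sq_le_mul _ (fun k _ => ha₀ k)
          (fun k _ => mul_nonneg (ha₀ k) (sq_nonneg _)) (fun k _ => le_of_eq (by ring))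
    _ ≤ (∑' k, a k) * ∑ k ∈ range (m + 1), a k * c (m - k) ^ 2 := by
        gcongr
        · exact sum_nonneg fun k _ => mul_nonneg (ha₀ k) (sq_nonneg _)
        · exact ha.sum_le_tsum _ fun k _ => ha₀ k

/-- Coefficients of the eigenfunction of `f ↦ (∑ bₖ zᵏ) f(α z)` for the eigenvalue `b 0 * α ^ p`:
comparing coefficients of `zᵐ` gives a lower triangular system with diagonal `b 0 * α ^ m`. -/
def eigenCoeff (b : ℕ → ℂ) (α : ℂ) (p : ℕ) : ℕ → ℂ
  | m =>
    if m < p then 0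
    else if m = p then 1
    else (∑ k : Fin m, b (m - k) * α ^ (k : ℕ) * eigenCoeff b α p k) / (b 0 * (α ^ p - α ^ m))

namespace eigenCoeff

variable {b : ℕ → ℂ} {α : ℂ} {p m : ℕ}

lemma of_lt (h : m < p) : eigenCoeff b α p m = 0 := by
  rw [eigenCoeff, if_pos h]

@[simp] lemma self : eigenCoeff b α p p = 1 := by
  rw [eigenCoeff]; simp

lemma of_gt (h : p < m) : eigenCoeff b α p m =
    (∑ k ∈ range m, b (m - k) * α ^ k * eigenCoeff b α p k) / (b 0 * (α ^ p - α ^ m)) := by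
  rw [eigenCoeff, if_neg (by omega), if_neg (by omega),
    Fin.sum_univ_eq_sum_range (fun k => b (m - k) * α ^ k * eigenCoeff b α p k)]

theorem sum_range_succ_mul (hb0 : b 0 ≠ 0) (hα0 : α ≠ 0) (hα1 : ‖α‖ < 1) (m : ℕ) :
    ∑ k ∈ range (m + 1), b (m - k) * α ^ k * eigenCoeff b α p k
      = b 0 * α ^ p * eigenCoeff b α p m := by
  rw [sum_range_succ, Nat.sub_self]
  rcases lt_trichotomy m p with h | rfl | h
  · rw [sum_eq_zero fun k hk => by rw [of_lt ((mem_range.mp hk).trans h), mul_zero], of_lt h]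
    simp
  · rw [sum_eq_zero fun k hk => by rw [of_lt (mem_range.mp hk), mul_zero]]
    simp
  · have hden : α ^ p - α ^ m ≠ 0 := sub_ne_zero.mpr fun heq => h.ne
      (pow_right_injective₀ (norm_pos_iff.mpr hα0) hα1.ne (by simpa using congrArg norm heq))
    rw [of_gt h]
    field_simp
    ring

lemma norm_le_sum (hb0 : b 0 ≠ 0) (hα0 : α ≠ 0) (hα1 : ‖α‖ < 1) (h : p < m) :
    ‖eigenCoeff b α p m‖ ≤ (‖b 0‖ * ‖α‖ ^ p * (1 - ‖α‖))⁻¹ *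
      ∑ k ∈ range m, ‖b (m - k)‖ * ‖α‖ ^ k * ‖eigenCoeff b α p k‖ := by
  have hden : ‖b 0‖ * ‖α‖ ^ p * (1 - ‖α‖) ≤ ‖b 0 * (α ^ p - α ^ m)‖ := by
    have hpow : ‖α‖ ^ m ≤ ‖α‖ ^ (p + 1) := pow_le_pow_of_le_one (norm_nonneg α) hα1.le h
    have := norm_sub_norm_le (α ^ p) (α ^ m)
    rw [norm_pow, norm_pow] at this
    rw [norm_mul, mul_assoc]
    gcongr
    rw [pow_succ] at hpow
    linarith
  have hpos : 0 < ‖b 0‖ * ‖α‖ ^ p * (1 - ‖α‖) := by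
    have := norm_pos_iff.mpr hb0
    have := norm_pos_iff.mpr hα0
    have : 0 < 1 - ‖α‖ := by linarith
    positivity
  rw [of_gt h, norm_div, div_eq_inv_mul]
  gcongr
  refine (norm_sum_le _ _).trans_eq ?_
  simp only [norm_mul, norm_pow]

theorem exists_norm_le (hb0 : b 0 ≠ 0) (hα0 : α ≠ 0) (hα1 : ‖α‖ < 1) {A : ℝ}
    (hA : ∀ n, ‖b n‖ ≤ A) : ∃ M, ∀ m, ‖eigenCoeff b α p m‖ ≤ M := by
  set K := (‖b 0‖ * ‖α‖ ^ p * (1 - ‖α‖))⁻¹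
  have hK : 0 ≤ K := inv_nonneg.mpr (mul_nonneg (by positivity) (by linarith))
  have hA0 : 0 ≤ A := (norm_nonneg _).trans (hA 0)
  set x : ℕ → ℝ := fun k => ‖α‖ ^ k * ‖eigenCoeff b α p k‖
  have hx : ∀ k, 0 ≤ x k := fun k => by positivity
  have hrec : ∀ m, p < m → ‖eigenCoeff b α p m‖ ≤ K * A * ∑ k ∈ range m, x k := by
    intro m h
    calc ‖eigenCoeff b α p m‖
        ≤ K * ∑ k ∈ range m, ‖b (m - k)‖ * ‖α‖ ^ k * ‖eigenCoeff b α p k‖ :=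
          norm_le_sum hb0 hα0 hα1 h
      _ ≤ K * ∑ k ∈ range m, A * x k := by
          refine mul_le_mul_of_nonneg_left (sum_le_sum fun k _ => ?_) hK
          rw [mul_assoc]
          exact mul_le_mul_of_nonneg_right (hA _) (hx k)
      _ = K * A * ∑ k ∈ range m, x k := by rw [← mul_sum, mul_assoc]
  have hgron : ∀ m, p + 1 ≤ m →
      ∑ k ∈ range m, x k ≤ (∑ k ∈ range (p + 1), x k) * Real.exp (K * A * (1 - ‖α‖)⁻¹) := by
    intro m hm
    refine (sum_range_le_mul_exp_of_le_mul_sum hx (w := fun k => K * A * ‖α‖ ^ k)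
      (fun m hm => ?_) hm).trans ?_
    · calc x m ≤ ‖α‖ ^ m * (K * A * ∑ k ∈ range m, x k) :=
            mul_le_mul_of_nonneg_left (hrec m hm) (by positivity)
        _ = K * A * ‖α‖ ^ m * ∑ k ∈ range m, x k := by ring
    · gcongr
      rw [← mul_sum]
      gcongr
      refine (geom_sum_Ico_le_of_lt_one (norm_nonneg α) hα1).trans ?_
      rw [div_eq_mul_inv]
      exact mul_le_of_le_one_left (inv_nonneg.mpr (by linarith))
        (pow_le_one₀ (norm_nonneg α) hα1.le)
  refine ⟨max 1 (K * A * ((∑ k ∈ range (p + 1), x k) * Real.exp (K * A * (1 - ‖α‖)⁻¹))),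
    fun m => ?_⟩
  rcases lt_trichotomy m p with h | rfl | h
  · simp [of_lt h]
  · simp
  · exact (hrec m h).trans ((mul_le_mul_of_nonneg_left (hgron m h) (by positivity)).trans
      (le_max_right _ _))

theorem memℓp (hb0 : b 0 ≠ 0) (hα0 : α ≠ 0) (hα1 : ‖α‖ < 1) (hb : Memℓp b 2) :
    Memℓp (eigenCoeff b α p) 2 := by
  obtain ⟨A, hA⟩ := memℓp_infty_iff.mp (hb.of_exponent_ge le_top)
  obtain ⟨M, hM⟩ := exists_norm_le (p := p) hb0 hα0 hα1 fun n => hA ⟨n, rfl⟩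
  set K := (‖b 0‖ * ‖α‖ ^ p * (1 - ‖α‖))⁻¹
  have hK : 0 ≤ K := inv_nonneg.mpr (mul_nonneg (by positivity) (by linarith))
  have hM0 : 0 ≤ M := (norm_nonneg _).trans (hM 0)
  have hconv := summable_sq_sum_range_mul (a := fun k => ‖α‖ ^ k) (c := fun n => ‖b n‖)
    (fun k => by positivity) (summable_geometric_of_lt_one (norm_nonneg α) hα1)
    (by simpa using hb.summable (by norm_num))
  refine memℓp_gen (Summable.of_norm_bounded_eventually_nat (hconv.mul_left ((K * M) ^ 2)) ?_)
  filter_upwards [eventually_gt_atTop p] with m hm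
  have hbound : ‖eigenCoeff b α p m‖ ≤ K * M * ∑ k ∈ range (m + 1), ‖α‖ ^ k * ‖b (m - k)‖ :=
    calc ‖eigenCoeff b α p m‖
        ≤ K * ∑ k ∈ range m, ‖b (m - k)‖ * ‖α‖ ^ k * ‖eigenCoeff b α p k‖ :=
          norm_le_sum hb0 hα0 hα1 hm
      _ ≤ K * ∑ k ∈ range m, M * (‖α‖ ^ k * ‖b (m - k)‖) := by
          refine mul_le_mul_of_nonneg_left (sum_le_sum fun k _ => ?_) hK
          rw [mul_comm M, mul_comm ‖b _‖]
          exact mul_le_mul_of_nonneg_left (hM k) (by positivity)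
      _ ≤ K * M * ∑ k ∈ range (m + 1), ‖α‖ ^ k * ‖b (m - k)‖ := by
          rw [← mul_sum, mul_assoc]
          refine mul_le_mul_of_nonneg_left (mul_le_mul_of_nonneg_left ?_ hM0) hK
          exact sum_le_sum_of_subset_of_nonneg (range_subset_range.mpr m.le_succ)
            fun k _ _ => by positivity
  rw [Real.norm_of_nonneg (by positivity), ENNReal.toReal_ofNat, Real.rpow_two, ← mul_pow]
  exact pow_le_pow_left₀ (norm_nonneg _) hbound 2

end eigenCoeff

namespace H2

lemma norm_apply_le (f : H2) (n : ℕ) : ‖f n‖ ≤ ‖f‖ :=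
  lp.norm_apply_le_norm two_ne_zero f n

lemma summable_norm_mul_pow (f : H2) {z : ℂ} (hz : ‖z‖ < 1) :
    Summable fun n => ‖f n * z ^ n‖ := by
  refine .of_nonneg_of_le (fun n => norm_nonneg _) (fun n => ?_)
    ((summable_geometric_of_lt_one (norm_nonneg z) hz).mul_left ‖f‖)
  rw [norm_mul, norm_pow]
  gcongr
  exact norm_apply_le f n

lemma toFun_eq_ofScalarsSum (f : H2) :
    H2.toFun f = FormalMultilinearSeries.ofScalarsSum (E := ℂ) f := by
  ext z
  simp [H2.toFun, FormalMultilinearSeries.ofScalars_sum_eq]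

lemma hasFPowerSeriesAt (f : H2) :
    HasFPowerSeriesAt (H2.toFun f) (FormalMultilinearSeries.ofScalars ℂ f) 0 := by
  have hr : ((1 : NNReal) : ENNReal) ≤ (FormalMultilinearSeries.ofScalars ℂ f).radius :=
    FormalMultilinearSeries.le_radius_of_bound _ ‖f‖ fun n => by
      simpa [FormalMultilinearSeries.ofScalars_norm] using norm_apply_le f n
  rw [toFun_eq_ofScalarsSum]
  exact ((FormalMultilinearSeries.ofScalars ℂ f).hasFPowerSeriesOnBall
    (lt_of_lt_of_le (by simp) hr)).hasFPowerSeriesAt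

lemma ext_of_eqOn_toFun {f g : H2} (h : Set.EqOn (H2.toFun f) (H2.toFun g) (ball 0 1)) :
    f = g := by
  have hfg : H2.toFun f =ᶠ[𝓝 0] H2.toFun g :=
    Filter.eventuallyEq_of_mem (ball_mem_nhds 0 one_pos) h
  have := ((hasFPowerSeriesAt f).congr hfg).eq_formalMultilinearSeries (hasFPowerSeriesAt g)
  exact lp.ext (FormalMultilinearSeries.ofScalars_series_injective ℂ ℂ this)

lemma toFun_smul (c : ℂ) (f : H2) (z : ℂ) : H2.toFun (c • f) z = c * H2.toFun f z := by
  simp only [H2.toFun, lp.coeFn_smul, Pi.smul_apply, smul_eq_mul, ← tsum_mul_left, mul_assoc]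

lemma toFun_star (f : H2) : H2.toFun (star f) = conjSymb (H2.toFun f) := by
  ext z
  simp only [H2.toFun, conjSymb, lp.coeFn_star, Pi.star_apply, starRingEnd_apply, tsum_star,
    star_mul', star_pow, star_star]

lemma toFun_apply_zero (f : H2) : H2.toFun f 0 = f 0 := by
  rw [H2.toFun, tsum_eq_single 0 fun n hn => by simp [zero_pow hn]]
  simp

lemma toFun_mul_toFun_mul_left_eq_tsum (f g : H2) (α : ℂ) (hα : ‖α‖ ≤ 1) {z : ℂ} (hz : ‖z‖ < 1) :
    H2.toFun f z * H2.toFun g (α * z)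
      = ∑' m, (∑ k ∈ range (m + 1), f (m - k) * α ^ k * g k) * z ^ m := by
  have hαz : ‖α * z‖ < 1 := by
    rw [norm_mul]; nlinarith [norm_nonneg α, norm_nonneg z]
  have hg : Summable fun k => ‖g k * α ^ k * z ^ k‖ := by
    simpa only [mul_pow, mul_assoc] using summable_norm_mul_pow g hαz
  simp only [H2.toFun, mul_pow, ← mul_assoc]
  rw [tsum_mul_tsum_eq_tsum_sum_antidiagonal_of_summable_norm (summable_norm_mul_pow f hz) hg]
  refine tsum_congr fun m => ?_
  rw [sum_mul, Nat.sum_antidiagonal_eq_sum_range_succ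
    (fun i j => f i * z ^ i * (g j * α ^ j * z ^ j)), ← sum_range_reflect]
  refine sum_congr rfl fun k hk => ?_
  have hk : k ≤ m := Nat.lt_succ_iff.mp (mem_range.mp hk)
  rw [show m.succ - 1 - k = m - k by omega, Nat.sub_sub_self hk]
  calc f (m - k) * z ^ (m - k) * (g k * α ^ k * z ^ k)
      = f (m - k) * α ^ k * g k * (z ^ (m - k) * z ^ k) := by ring
    _ = f (m - k) * α ^ k * g k * z ^ m := by rw [← pow_add, Nat.sub_add_cancel hk]

theorem exists_mul_dilation_eigenvector {ψ : H2} (hψ0 : ψ 0 ≠ 0) {α : ℂ} (hα0 : α ≠ 0)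
    (hα1 : ‖α‖ < 1) (p : ℕ) : ∃ g : H2, g p = 1 ∧ ∀ z ∈ ball (0 : ℂ) 1,
      H2.toFun ψ z * H2.toFun g (α * z) = (ψ 0 * α ^ p) * H2.toFun g z := by
  refine ⟨⟨eigenCoeff ψ α p, eigenCoeff.memℓp hψ0 hα0 hα1 (lp.memℓp ψ)⟩, eigenCoeff.self,
    fun z hz => ?_⟩
  rw [H2.toFun_mul_toFun_mul_left_eq_tsum _ _ _ hα1.le (mem_ball_zero_iff.mp hz), H2.toFun,
    ← tsum_mul_left]
  exact tsum_congr fun m => by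
    rw [eigenCoeff.sum_range_succ_mul hψ0 hα0 hα1, mul_assoc]

end H2

theorem stmt19 (lam : ℂ) (hlam0 : lam ≠ 0) (hlam1 : ‖lam‖ < 1)
    (φ : H2) (hφ0 : H2.toFun φ 0 ≠ 0)
    (T : H2 →L[ℂ] H2)
    (hT : ∀ f : H2, ∀ z ∈ ball (0:ℂ) 1,
      H2.toFun (ContinuousLinearMap.adjoint T f) z
        = conjSymb (H2.toFun φ) z * H2.toFun f (conj lam * z)) :
    ¬ Supercyclic T := by
  have hψ0 : (star φ) 0 ≠ 0 := by
    simpa [lp.coeFn_star, ← H2.toFun_apply_zero] using hφ0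
  have heigen : ∀ p : ℕ, ∃ g : H2, g ≠ 0 ∧
      ContinuousLinearMap.adjoint T g = ((star φ) 0 * conj lam ^ p) • g := by
    intro p
    obtain ⟨g, hgp, hg⟩ := H2.exists_mul_dilation_eigenvector (α := conj lam) hψ0
      (by simpa using hlam0) (by simpa using hlam1) p
    refine ⟨g, fun h => by simp [h] at hgp, H2.ext_of_eqOn_toFun fun z hz => ?_⟩
    rw [hT g z hz, H2.toFun_smul, ← hg z hz, H2.toFun_star]
  obtain ⟨g₀, hg₀, h₀⟩ := heigen 0
  obtain ⟨g₁, hg₁, h₁⟩ := heigen 1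
  refine not_dense_projective_orbit_of_adjoint_eigenvectors h₀ h₁ hg₀ hg₁ ?_
  simpa using mul_lt_of_lt_one_right (norm_pos_iff.mpr hψ0) hlam1
end
end
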